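/- The FFT-based tensor sketch identity for k = 2: for independent count sketches CS^{(1)}, CS^{(2)} with bucket index arithmetic in Z/cZ, the order-2 tensor sketch satisfies TS_2(z) = IDFT(DFT(CS^{(1)}(z)) ⊙ DFT(CS^{(2)}(z))) for all z ∈ R^n, where DFT is the discrete Fourier transform on C^c, IDFT its inverse, and ⊙ the elementwise product; equivalently TS_2(z) is the cyclic convolution of CS^{(1)}(z) and CS^{(2)}(z). -/
import Mathlib


open Finset ZMod

/-- Count sketch of a vector with buckets in `ZMod c`, complex-valued. -/
noncomputable def countSketch {n c : ℕ} (h : Fin n → ZMod c) (s : Fin n → ℝ)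
    (z : Fin n → ℝ) : ZMod c → ℂ :=
  fun b => ∑ j, if h j = b then (s j * z j : ℝ) else 0

/-- Order-2 tensor sketch: `TS_2(z)_i = Σ_{(j₁,j₂) : h₁(j₁)+h₂(j₂) = i (mod c)}
s₁(j₁) s₂(j₂) z_{j₁} z_{j₂}`. -/
noncomputable def tensorSketch2 {n c : ℕ} (h₁ h₂ : Fin n → ZMod c) (s₁ s₂ : Fin n → ℝ)
    (z : Fin n → ℝ) : ZMod c → ℂ :=
  fun i => ∑ j₁ : Fin n, ∑ j₂ : Fin n,
    if h₁ j₁ + h₂ j₂ = i then (s₁ j₁ * s₂ j₂ * z j₁ * z j₂ : ℝ) else 0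

/-- DFT of a cyclic convolution is the pointwise product of DFTs. -/
lemma dft_conv {c : ℕ} [NeZero c] (f g : ZMod c → ℂ) :
    ZMod.dft (fun i => ∑ b : ZMod c, f b * g (i - b))
      = fun k => ZMod.dft f k * ZMod.dft g k := by
  funext k
  simp only [ZMod.dft_apply, smul_eq_mul]
  have key : ∀ i : ZMod c, ZMod.stdAddChar (-(i * k)) * ∑ b : ZMod c, f b * g (i - b)
      = ∑ b : ZMod c, (ZMod.stdAddChar (-(b * k)) * f b)
          * (ZMod.stdAddChar (-((i - b) * k)) * g (i - b)) := by
    intro i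
    rw [Finset.mul_sum]
    refine Finset.sum_congr rfl fun b _ => ?_
    have h : ZMod.stdAddChar (-(i * k))
        = ZMod.stdAddChar (-(b * k)) * ZMod.stdAddChar (-((i - b) * k)) := by
      rw [← AddChar.map_add_eq_mul]
      congr 1
      ring
    rw [h]; ring
  simp only [key]
  rw [Finset.sum_comm, Finset.sum_mul_sum]
  refine Finset.sum_congr rfl fun b _ => ?_
  exact Fintype.sum_equiv (Equiv.subRight b) _ _ (fun i => by simp)

/-- FFT-based identity for the order-2 tensor sketch:
`TS_2(z) = DFT⁻¹(DFT(CS¹(z)) ⊙ DFT(CS²(z)))`; equivalently, `TS_2(z)` is the cyclic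
convolution of the two count sketches `CS¹(z)` and `CS²(z)`. -/
theorem tensorSketch2_eq_idft_dft_mul {n c : ℕ} [NeZero c]
    (h₁ h₂ : Fin n → ZMod c) (s₁ s₂ : Fin n → ℝ)
    (hs₁ : ∀ j, s₁ j = 1 ∨ s₁ j = -1) (hs₂ : ∀ j, s₂ j = 1 ∨ s₂ j = -1)
    (z : Fin n → ℝ) :
    tensorSketch2 h₁ h₂ s₁ s₂ z
      = ZMod.dft.symm
          (fun i => ZMod.dft (countSketch h₁ s₁ z) i * ZMod.dft (countSketch h₂ s₂ z) i)
      ∧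
    ∀ i : ZMod c,
      tensorSketch2 h₁ h₂ s₁ s₂ z i
        = ∑ b : ZMod c, countSketch h₁ s₁ z b * countSketch h₂ s₂ z (i - b) := by
  have hconv : ∀ i : ZMod c,
      tensorSketch2 h₁ h₂ s₁ s₂ z i
        = ∑ b : ZMod c, countSketch h₁ s₁ z b * countSketch h₂ s₂ z (i - b) := by
    intro i
    simp only [tensorSketch2, countSketch, Finset.sum_mul_sum]
    conv_rhs => rw [Finset.sum_comm]
    refine Finset.sum_congr rfl fun j₁ _ => ?_
    conv_rhs => rw [Finset.sum_comm]
    refine Finset.sum_congr rfl fun j₂ _ => ?_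
    rw [Finset.sum_eq_single (h₁ j₁)]
    · by_cases hcase : h₁ j₁ + h₂ j₂ = i
      · have h2 : h₂ j₂ = i - h₁ j₁ := by rw [← hcase]; ring
        rw [if_pos hcase, if_pos rfl, if_pos h2]
        push_cast
        ring
      · have h2 : h₂ j₂ ≠ i - h₁ j₁ := fun hh => hcase (by rw [hh]; ring)
        simp [hcase, h2]
    · intro b _ hb
      simp [Ne.symm hb]
    · simp
  refine ⟨?_, hconv⟩
  have : tensorSketch2 h₁ h₂ s₁ s₂ z
      = fun i => ∑ b : ZMod c, countSketch h₁ s₁ z b * countSketch h₂ s₂ z (i - b) :=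
    funext hconv
  rw [this, ← dft_conv, LinearEquiv.symm_apply_apply]
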